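/- Consider a semidefinite network game with payoff operators Φ_{ij} and Φ_i(X) = Σ_{j ∈ N(i)} Φ_{ij}(X_j). A profile X = (X_1,…,X_N) of density matrices is a Nash equilibrium if and only if there exist real numbers λ_1,…,λ_N such that for every i ∈ [N]: λ_i I_{n_i} − Φ_i(X) is positive semidefinite and ⟨X_i, λ_i I_{n_i} − Φ_i(X)⟩ = 0. -/

import Mathlib

open Matrix Kronecker BigOperators ComplexOrder

noncomputable section

/-- Frobenius inner product `⟨A, B⟩ = tr(Aᴴ B)`. -/
def frob {α : Type*} [Fintype α] (A B : Matrix α α ℂ) : ℂ := (Aᴴ * B).trace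

/-- A density matrix: positive semidefinite with trace one. -/
def IsDensity {α : Type*} [Fintype α] (X : Matrix α α ℂ) : Prop :=
  X.PosSemidef ∧ X.trace = 1

/-- The payoff operator `Φ_R` associated with a payoff matrix `R`,
defined entrywise by `Φ_R(T)_{a,b} = Σ_{c,d} R_{(a,c),(b,d)} T_{d,c}`. -/
def payoffOp {k m : ℕ} (R : Matrix (Fin k × Fin m) (Fin k × Fin m) ℂ)
    (T : Matrix (Fin m) (Fin m) ℂ) : Matrix (Fin k) (Fin k) ℂ :=
  Matrix.of fun a b => ∑ c, ∑ d, R (a, c) (b, d) * T d c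

/-- The payoff of player `i`: `p_i(X) = Σ_{j ∈ N(i)} ⟨R_{ij}, X_i ⊗ X_j⟩` (a real number). -/
def payoff {N : ℕ} (G : SimpleGraph (Fin N)) [DecidableRel G.Adj] (n : Fin N → ℕ)
    (R : ∀ i j : Fin N, Matrix (Fin (n i) × Fin (n j)) (Fin (n i) × Fin (n j)) ℂ)
    (X : ∀ i, Matrix (Fin (n i)) (Fin (n i)) ℂ) (i : Fin N) : ℝ :=
  (∑ j ∈ G.neighborFinset i, frob (R i j) ((X i) ⊗ₖ (X j))).re

/-- `Φ_i(X) = Σ_{j ∈ N(i)} Φ_{ij}(X_j)`. -/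
def Phi {N : ℕ} (G : SimpleGraph (Fin N)) [DecidableRel G.Adj] (n : Fin N → ℕ)
    (R : ∀ i j : Fin N, Matrix (Fin (n i) × Fin (n j)) (Fin (n i) × Fin (n j)) ℂ)
    (X : ∀ i, Matrix (Fin (n i)) (Fin (n i)) ℂ) (i : Fin N) :
    Matrix (Fin (n i)) (Fin (n i)) ℂ :=
  ∑ j ∈ G.neighborFinset i, payoffOp (R i j) (X j)

/-- Nash equilibrium (best-response) condition for a strategy profile. -/
def IsNash {N : ℕ} (G : SimpleGraph (Fin N)) [DecidableRel G.Adj] (n : Fin N → ℕ)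
    (R : ∀ i j : Fin N, Matrix (Fin (n i) × Fin (n j)) (Fin (n i) × Fin (n j)) ℂ)
    (X : ∀ i, Matrix (Fin (n i)) (Fin (n i)) ℂ) : Prop :=
  ∀ i, ∀ S : Matrix (Fin (n i)) (Fin (n i)) ℂ, IsDensity S →
    payoff G n R (Function.update X i S) i ≤ payoff G n R X i

/-- The largest eigenvalue of a Hermitian matrix (junk value `0` otherwise). -/
def lamMax {k : ℕ} (A : Matrix (Fin k) (Fin k) ℂ) : ℝ :=
  if h : A.IsHermitian then ⨆ i, h.eigenvalues i else 0

/-! The payoff of player `i` is real-linear in its own strategy: `p_i(S, X_{-i}) = Re ⟨S, Φ_i(X)⟩`.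
Hence `X` is an equilibrium iff every `X_i` maximizes `S ↦ Re ⟨S, A⟩` over density matrices, with
`A = Φ_i(X)` Hermitian, and the multiplier is the optimal value `λ_i = ⟨X_i, A⟩`. Testing against the
rank-one densities `v v† / ‖v‖²` gives `v† A v ≤ λ_i ‖v‖²`, i.e. `λ_i I - A ⪰ 0`, while `tr X_i = 1`
gives `⟨X_i, λ_i I - A⟩ = λ_i - ⟨X_i, A⟩ = 0`. Conversely, `⟨S, λ I - A⟩ ≥ 0` for every density `S`
because the trace of a product of positive semidefinite matrices is nonnegative, so
`⟨S, A⟩ ≤ λ = ⟨X_i, A⟩`. -/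

section Frob

variable {α : Type*} [Fintype α]

lemma frob_of_isHermitian {A : Matrix α α ℂ} (hA : A.IsHermitian) (B : Matrix α α ℂ) :
    frob A B = (A * B).trace := by
  rw [frob, hA.eq]

lemma ofReal_re_frob_of_isHermitian {A B : Matrix α α ℂ} (hA : A.IsHermitian)
    (hB : B.IsHermitian) : ((frob A B).re : ℂ) = frob A B := by
  refine Complex.conj_eq_iff_re.mp ?_
  rw [← Complex.star_def, frob_of_isHermitian hA, ← trace_conjTranspose, conjTranspose_mul,
    hA.eq, hB.eq, trace_mul_comm]

lemma frob_sum {ι : Type*} (A : Matrix α α ℂ) (s : Finset ι) (f : ι → Matrix α α ℂ) :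
    frob A (∑ j ∈ s, f j) = ∑ j ∈ s, frob A (f j) := by
  simp only [frob, Matrix.mul_sum, trace_sum]

lemma frob_real_smul (r : ℝ) (A B : Matrix α α ℂ) : frob (r • A) B = r * frob A B := by
  rw [frob, conjTranspose_smul, star_trivial, Matrix.smul_mul, trace_smul, Complex.real_smul, frob]

open scoped MatrixOrder in
lemma frob_nonneg [DecidableEq α] {A B : Matrix α α ℂ} (hA : A.PosSemidef) (hB : B.PosSemidef) :
    0 ≤ frob A B := by
  obtain ⟨C, rfl⟩ := CStarAlgebra.nonneg_iff_eq_star_mul_self.mp hA.nonneg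
  rw [frob_of_isHermitian hA.isHermitian, star_eq_conjTranspose, Matrix.mul_assoc,
    trace_mul_comm]
  exact (hB.mul_mul_conjTranspose_same C).trace_nonneg

lemma frob_vecMulVec_self_star (v : α → ℂ) (A : Matrix α α ℂ) :
    frob (vecMulVec v (star v)) A = star v ⬝ᵥ (A *ᵥ v) := by
  rw [frob_of_isHermitian (posSemidef_vecMulVec_self_star v).isHermitian, vecMulVec_mul,
    trace_vecMulVec, dotProduct_comm, dotProduct_mulVec]

end Frob

section Density

variable {α : Type*} [Fintype α]

lemma IsDensity.frob_smul_one_sub [DecidableEq α] {X : Matrix α α ℂ} (hX : IsDensity X) (c : ℂ)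
    (A : Matrix α α ℂ) : frob X (c • 1 - A) = c - frob X A := by
  rw [frob, frob, Matrix.mul_sub, trace_sub, Matrix.mul_smul, Matrix.mul_one, trace_smul,
    hX.1.isHermitian.eq, hX.2, smul_eq_mul, mul_one]

lemma isDensity_normalized_vecMulVec {v : α → ℂ} (hv : v ≠ 0) :
    IsDensity (((star v ⬝ᵥ v).re⁻¹ : ℝ) • vecMulVec v (star v) : Matrix α α ℂ) := by
  have hpos : 0 < star v ⬝ᵥ v := dotProduct_star_self_pos_iff.mpr hv
  obtain ⟨hre_pos, him⟩ := Complex.pos_iff.mp hpos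
  refine ⟨(posSemidef_vecMulVec_self_star v).smul (inv_nonneg.mpr hre_pos.le), ?_⟩
  have hreal : star v ⬝ᵥ v = ((star v ⬝ᵥ v).re : ℂ) := Complex.ext rfl (by simp [← him])
  rw [trace_smul, trace_vecMulVec, dotProduct_comm v, hreal, Complex.ofReal_re, Complex.real_smul,
    ← Complex.ofReal_mul, inv_mul_cancel₀ hre_pos.ne', Complex.ofReal_one]

lemma posSemidef_smul_one_sub_of_re_frob_le [DecidableEq α] {A : Matrix α α ℂ}
    (hA : A.IsHermitian) {c : ℝ} (h : ∀ S, IsDensity S → (frob S A).re ≤ c) :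
    ((c : ℂ) • (1 : Matrix α α ℂ) - A).PosSemidef := by
  have hM : ((c : ℂ) • (1 : Matrix α α ℂ) - A).IsHermitian :=
    (isHermitian_one.smul (Complex.conj_ofReal c)).sub hA
  refine .of_dotProduct_mulVec_nonneg hM fun x => ?_
  refine Complex.nonneg_iff.mpr ⟨?_, (hM.im_star_dotProduct_mulVec_self x).symm⟩
  rcases eq_or_ne x 0 with rfl | hx
  · simp
  have hr : 0 < (star x ⬝ᵥ x).re := (Complex.pos_iff.mp (dotProduct_star_self_pos_iff.mpr hx)).1
  have hx_le := h _ (isDensity_normalized_vecMulVec hx)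
  rw [frob_real_smul, frob_vecMulVec_self_star, Complex.re_ofReal_mul, inv_mul_le_iff₀ hr] at hx_le
  simp only [sub_mulVec, smul_mulVec, one_mulVec, dotProduct_sub, dotProduct_smul, Complex.sub_re,
    smul_eq_mul, Complex.re_ofReal_mul]
  linarith

theorem IsDensity.forall_re_frob_le_iff [DecidableEq α] {A X : Matrix α α ℂ}
    (hA : A.IsHermitian) (hX : IsDensity X) :
    (∀ S, IsDensity S → (frob S A).re ≤ (frob X A).re) ↔
      ∃ c : ℝ, ((c : ℂ) • (1 : Matrix α α ℂ) - A).PosSemidef ∧ frob X ((c : ℂ) • 1 - A) = 0 := by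
  constructor
  · intro h
    refine ⟨_, posSemidef_smul_one_sub_of_re_frob_le hA h, ?_⟩
    rw [hX.frob_smul_one_sub, ofReal_re_frob_of_isHermitian hX.1.isHermitian hA, sub_self]
  · rintro ⟨c, hpsd, hcompl⟩ S hS
    have hXA : frob X A = c := (sub_eq_zero.mp (hX.frob_smul_one_sub _ A ▸ hcompl)).symm
    have hSA := (Complex.nonneg_iff.mp (frob_nonneg hS.1 hpsd)).1
    rw [hS.frob_smul_one_sub, Complex.sub_re, Complex.ofReal_re] at hSA
    rw [hXA, Complex.ofReal_re]
    linarith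

end Density

section Game

lemma payoffOp_isHermitian {k m : ℕ} {R : Matrix (Fin k × Fin m) (Fin k × Fin m) ℂ}
    (hR : R.IsHermitian) {T : Matrix (Fin m) (Fin m) ℂ} (hT : T.IsHermitian) :
    (payoffOp R T).IsHermitian := by
  ext a b
  simp only [conjTranspose_apply, payoffOp, of_apply, star_sum, star_mul']
  rw [Finset.sum_comm]
  refine Finset.sum_congr rfl fun c _ => Finset.sum_congr rfl fun d _ => ?_
  rw [hT.apply d c, hR.apply (a, c) (b, d)]

lemma frob_kronecker_eq_frob_payoffOp {k m : ℕ} {R : Matrix (Fin k × Fin m) (Fin k × Fin m) ℂ}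
    (hR : R.IsHermitian) {S : Matrix (Fin k) (Fin k) ℂ} (hS : S.IsHermitian)
    (T : Matrix (Fin m) (Fin m) ℂ) :
    frob R (S ⊗ₖ T) = frob S (payoffOp R T) := by
  rw [frob_of_isHermitian hR, frob_of_isHermitian hS]
  simp only [trace, diag, mul_apply, Fintype.sum_prod_type, kroneckerMap_apply, payoffOp, of_apply,
    Finset.mul_sum]
  conv_rhs => rw [Finset.sum_comm]
  refine Finset.sum_congr rfl fun a _ => ?_
  rw [Finset.sum_comm]
  exact Finset.sum_congr rfl fun b _ => Finset.sum_congr rfl fun c _ =>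
    Finset.sum_congr rfl fun d _ => by ring

variable {N : ℕ} {G : SimpleGraph (Fin N)} [DecidableRel G.Adj] {n : Fin N → ℕ}
  {R : ∀ i j : Fin N, Matrix (Fin (n i) × Fin (n j)) (Fin (n i) × Fin (n j)) ℂ}

lemma Phi_isHermitian (hR : ∀ i j, G.Adj i j → (R i j).IsHermitian)
    {X : ∀ i, Matrix (Fin (n i)) (Fin (n i)) ℂ} (hX : ∀ j, (X j).IsHermitian) (i : Fin N) :
    (Phi G n R X i).IsHermitian :=
  isSelfAdjoint_sum _ fun j hj =>
    payoffOp_isHermitian (hR i j ((G.mem_neighborFinset i j).mp hj)) (hX j)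

lemma payoff_update_eq_re_frob (hR : ∀ i j, G.Adj i j → (R i j).IsHermitian)
    (X : ∀ i, Matrix (Fin (n i)) (Fin (n i)) ℂ) (i : Fin N)
    {S : Matrix (Fin (n i)) (Fin (n i)) ℂ} (hS : S.IsHermitian) :
    payoff G n R (Function.update X i S) i = (frob S (Phi G n R X i)).re := by
  rw [payoff, Phi, frob_sum]
  congr 1
  refine Finset.sum_congr rfl fun j hj => ?_
  have hij : G.Adj i j := (G.mem_neighborFinset i j).mp hj
  rw [Function.update_self, Function.update_of_ne hij.ne']
  exact frob_kronecker_eq_frob_payoffOp (hR i j hij) hS (X j)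

lemma isNash_iff_forall_re_frob_le (hR : ∀ i j, G.Adj i j → (R i j).IsHermitian)
    {X : ∀ i, Matrix (Fin (n i)) (Fin (n i)) ℂ} (hX : ∀ i, (X i).IsHermitian) :
    IsNash G n R X ↔ ∀ i, ∀ S, IsDensity S →
      (frob S (Phi G n R X i)).re ≤ (frob (X i) (Phi G n R X i)).re := by
  refine forall_congr' fun i => forall₂_congr fun S hS => ?_
  rw [payoff_update_eq_re_frob hR X i hS.1.isHermitian, ← payoff_update_eq_re_frob hR X i (hX i),
    Function.update_eq_self]

end Game

theorem stmt16_general {N : ℕ} (G : SimpleGraph (Fin N)) [DecidableRel G.Adj] (n : Fin N → ℕ)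
    (R : ∀ i j : Fin N, Matrix (Fin (n i) × Fin (n j)) (Fin (n i) × Fin (n j)) ℂ)
    (hR : ∀ i j, G.Adj i j → (R i j).IsHermitian)
    (X : ∀ i, Matrix (Fin (n i)) (Fin (n i)) ℂ) (hX : ∀ i, IsDensity (X i)) :
    IsNash G n R X ↔ ∃ lam : Fin N → ℝ, ∀ i,
      ((lam i : ℂ) • (1 : Matrix (Fin (n i)) (Fin (n i)) ℂ) - Phi G n R X i).PosSemidef ∧
      frob (X i) ((lam i : ℂ) • (1 : Matrix (Fin (n i)) (Fin (n i)) ℂ) - Phi G n R X i) = 0 := by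
  have hXh : ∀ i, (X i).IsHermitian := fun i => (hX i).1.isHermitian
  rw [isNash_iff_forall_re_frob_le hR hXh]
  exact (forall_congr' fun i => (hX i).forall_re_frob_le_iff (Phi_isHermitian hR hXh i)).trans
    Classical.skolem

/-- a profile of density matrices `X` is a Nash equilibrium iff there exist
reals `λ_1, …, λ_N` such that for every `i`, `λ_i I − Φ_i(X)` is positive semidefinite and
`⟨X_i, λ_i I − Φ_i(X)⟩ = 0`. -/
theorem stmt16 {N : ℕ} (G : SimpleGraph (Fin N)) [DecidableRel G.Adj] (n : Fin N → ℕ)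
    (hn : ∀ i, 0 < n i)
    (R : ∀ i j : Fin N, Matrix (Fin (n i) × Fin (n j)) (Fin (n i) × Fin (n j)) ℂ)
    (hR : ∀ i j, G.Adj i j → (R i j).IsHermitian)
    (X : ∀ i, Matrix (Fin (n i)) (Fin (n i)) ℂ) (hX : ∀ i, IsDensity (X i)) :
    IsNash G n R X ↔ ∃ lam : Fin N → ℝ, ∀ i,
      ((lam i : ℂ) • (1 : Matrix (Fin (n i)) (Fin (n i)) ℂ) - Phi G n R X i).PosSemidef ∧
      frob (X i) ((lam i : ℂ) • (1 : Matrix (Fin (n i)) (Fin (n i)) ℂ) - Phi G n R X i) = 0 :=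
  stmt16_general G n R hR X hX

end
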